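/- arXiv:2007.08483 — 2 statements merged into one kernel-verified Lean document; each statement's English description precedes it below -/
import Mathlib

section
/- Let p_1, p_2, ... be independent identically distributed random variables with values in the interval [ε₀, 1] for some ε₀ > 0, with mean μ = E[p_1], and let p̄_n = (1/n)·∑_{i=1}^n p_i. Define R₄(μ − x) = −log(x/μ) − ∑_{k=1}^4 (μ − x)^k/(k·μ^k) for x ∈ [ε₀, 1]. Then E[R₄(μ − p̄_n)] = O(1/n²); that is, there exist a constant C > 0 and a positive integer N such that |E[R₄(μ − p̄_n)]| ≤ C/n² for all n ≥ N. -/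
/-!
The derivative of `x ↦ R_m(μ - x)` is `-(μ - x)^m / (μ^m x)`, so by the mean value theorem
`|R_m(μ - x)| ≤ |μ - x|^(m+1) / (μ^m ε)` whenever `x, μ ≥ ε > 0`. For the sample mean,
`μ - p̄_n = -S_n / n` where `S_n` is the sum of the centred variables `p_i - μ`, which are
independent and bounded by `1`. In the binomial expansion of `E[(S_n + X)^4]`, with `X` the next
centred variable, every term carrying a factor `E[X]` or `E[S_n]` vanishes by independence, so
`E[S_{n+1}^4] ≤ E[S_n^4] + 6n + 1` and `E[S_n^4] ≤ 3n²`. Hence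
`|E[R₄(μ - p̄_n)]| ≤ E[S_n^4] / (n^4 ε₀^5) ≤ 3 / (ε₀^5 n²)`.
-/

open MeasureTheory ProbabilityTheory

/-- The Taylor remainder of the logarithm:
`R_m(μ - x) = -log(x/μ) - ∑_{k=1}^m (μ - x)^k/(k μ^k)`. -/
noncomputable def taylorRem (m : ℕ) (μ x : ℝ) : ℝ :=
  -Real.log (x / μ) - ∑ k ∈ Finset.Icc 1 m, (μ - x) ^ k / ((k : ℝ) * μ ^ k)

lemma taylorRem_zero (μ x : ℝ) : taylorRem 0 μ x = -Real.log (x / μ) := by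
  simp [taylorRem]

lemma taylorRem_succ (m : ℕ) (μ x : ℝ) :
    taylorRem (m + 1) μ x =
      taylorRem m μ x - (μ - x) ^ (m + 1) / ((m + 1 : ℕ) * μ ^ (m + 1)) := by
  rw [taylorRem, taylorRem, Finset.sum_Icc_succ_top (Nat.le_add_left 1 m)]
  ring

lemma taylorRem_self (m : ℕ) {μ : ℝ} (hμ : μ ≠ 0) : taylorRem m μ μ = 0 := by
  induction m with
  | zero => simp [taylorRem_zero, hμ]
  | succ m ih => simp [taylorRem_succ, ih]

lemma hasDerivAt_taylorRem (m : ℕ) {μ x : ℝ} (hμ : μ ≠ 0) (hx : x ≠ 0) :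
    HasDerivAt (taylorRem m μ) (-(μ - x) ^ m / (μ ^ m * x)) x := by
  induction m with
  | zero =>
    rw [show taylorRem 0 μ = fun y => -Real.log (y / μ) from funext (taylorRem_zero μ)]
    refine (((hasDerivAt_id' x).div_const μ).log (div_ne_zero hx hμ)).neg.congr_deriv ?_
    field_simp
  | succ m ih =>
    rw [show taylorRem (m + 1) μ = fun y =>
        taylorRem m μ y - (μ - y) ^ (m + 1) / ((m + 1 : ℕ) * μ ^ (m + 1)) from
      funext (taylorRem_succ m μ)]
    refine (ih.sub ((((hasDerivAt_id' x).const_sub μ).pow (m + 1)).div_const _)).congr_deriv ?_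
    rw [Nat.add_sub_cancel]
    field_simp
    ring

lemma abs_taylorRem_le {m : ℕ} {ε μ x : ℝ} (hε : 0 < ε) (hεμ : ε ≤ μ) (hεx : ε ≤ x) :
    |taylorRem m μ x| ≤ |μ - x| ^ (m + 1) / (μ ^ m * ε) := by
  have hμ : 0 < μ := hε.trans_le hεμ
  have hε_le : ∀ y ∈ Set.uIcc x μ, ε ≤ y := fun y hy => (le_min hεx hεμ).trans hy.1
  have hderiv : ∀ y ∈ Set.uIcc x μ,
      HasDerivWithinAt (taylorRem m μ) (-(μ - y) ^ m / (μ ^ m * y)) (Set.uIcc x μ) y :=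
    fun y hy => (hasDerivAt_taylorRem m hμ.ne' (hε.trans_le (hε_le y hy)).ne').hasDerivWithinAt
  have hderiv_le : ∀ y ∈ Set.uIcc x μ,
      ‖-(μ - y) ^ m / (μ ^ m * y)‖ ≤ |μ - x| ^ m / (μ ^ m * ε) := by
    intro y hy
    have hy_pos : 0 < y := hε.trans_le (hε_le y hy)
    rw [Real.norm_eq_abs, abs_div, abs_neg, abs_pow, abs_of_pos (by positivity : 0 < μ ^ m * y)]
    gcongr ?_ ^ m / (μ ^ m * ?_)
    · exact Set.abs_sub_right_of_mem_uIcc hy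
    · exact hε_le y hy
  have hmvt := (convex_uIcc x μ).norm_image_sub_le_of_norm_hasDerivWithin_le hderiv hderiv_le
    Set.right_mem_uIcc Set.left_mem_uIcc
  rw [taylorRem_self m hμ.ne', sub_zero, Real.norm_eq_abs, Real.norm_eq_abs, abs_sub_comm x]
    at hmvt
  calc |taylorRem m μ x| ≤ |μ - x| ^ m / (μ ^ m * ε) * |μ - x| := hmvt
    _ = |μ - x| ^ (m + 1) / (μ ^ m * ε) := by ring

lemma abs_sub_le_one_of_mem_Icc {ε x y : ℝ} (hε : 0 ≤ ε) (hx : x ∈ Set.Icc ε 1)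
    (hy : y ∈ Set.Icc ε 1) : |x - y| ≤ 1 :=
  abs_sub_le_iff.2 ⟨by linarith [hx.2, hy.1], by linarith [hx.1, hy.2]⟩

lemma abs_taylorRem_le_of_mem_Icc {m : ℕ} {ε μ x : ℝ} (hε : 0 < ε) (hμ : μ ∈ Set.Icc ε 1)
    (hx : x ∈ Set.Icc ε 1) : |taylorRem m μ x| ≤ |μ - x| ^ m / ε ^ (m + 1) := by
  refine (abs_taylorRem_le hε hμ.1 hx.1).trans
    (div_le_div₀ (by positivity) ?_ (by positivity) ?_)
  · exact pow_le_pow_of_le_one (abs_nonneg _) (abs_sub_le_one_of_mem_Icc hε.le hμ hx) m.le_succ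
  · rw [pow_succ]
    gcongr
    exact hμ.1

lemma sum_range_div_mem_Icc {a b : ℝ} {x : ℕ → ℝ} {n : ℕ} (hn : 0 < n)
    (hx : ∀ i, x i ∈ Set.Icc a b) : (∑ i ∈ Finset.range n, x i) / n ∈ Set.Icc a b := by
  have hn' : (0 : ℝ) < n := by exact_mod_cast hn
  constructor
  · rw [le_div_iff₀ hn']
    simpa [mul_comm] using Finset.card_nsmul_le_sum (Finset.range n) x a fun i _ => (hx i).1
  · rw [div_le_iff₀ hn']
    simpa [mul_comm] using Finset.sum_le_card_nsmul (Finset.range n) x b fun i _ => (hx i).2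

lemma abs_taylorRem_sum_range_div_le {m n : ℕ} {ε μ : ℝ} {x : ℕ → ℝ} (hε : 0 < ε)
    (hμ : μ ∈ Set.Icc ε 1) (hn : 0 < n) (hx : ∀ i, x i ∈ Set.Icc ε 1) :
    |taylorRem m μ ((∑ i ∈ Finset.range n, x i) / n)| ≤
      |∑ i ∈ Finset.range n, (x i - μ)| ^ m / (n ^ m * ε ^ (m + 1)) := by
  have hn' : (n : ℝ) ≠ 0 := by positivity
  have hdev : μ - (∑ i ∈ Finset.range n, x i) / n = -(∑ i ∈ Finset.range n, (x i - μ)) / n := by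
    rw [Finset.sum_sub_distrib, Finset.sum_const, Finset.card_range, nsmul_eq_mul]
    field_simp
    ring
  refine (abs_taylorRem_le_of_mem_Icc hε hμ (sum_range_div_mem_Icc hn hx)).trans_eq ?_
  rw [hdev, abs_div, abs_neg, Nat.abs_cast, div_pow, div_div]

section Moments

variable {Ω : Type*} [MeasurableSpace Ω] {P : Measure Ω}

lemma MeasureTheory.MemLp.integrable_pow_of_le [IsFiniteMeasure P] {X : Ω → ℝ} {p k : ℕ}
    (hX : MemLp X p P) (hk : k ≤ p) : Integrable (fun ω => X ω ^ k) P :=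
  (hX.mono_exponent (by exact_mod_cast hk)).integrable_norm_pow'.mono' (hX.1.pow k)
    (ae_of_all _ fun ω => by simp [norm_pow])

lemma ProbabilityTheory.IndepFun.integral_add_pow [IsFiniteMeasure P] {X Y : Ω → ℝ} {n : ℕ}
    (hXY : IndepFun X Y P) (hX : MemLp X n P) (hY : MemLp Y n P) :
    ∫ ω, (X ω + Y ω) ^ n ∂P = ∑ m ∈ Finset.range (n + 1),
      (n.choose m : ℝ) * (∫ ω, X ω ^ m ∂P) * ∫ ω, Y ω ^ (n - m) ∂P := by
  have hpow : ∀ m, IndepFun (fun ω => X ω ^ m) (fun ω => Y ω ^ (n - m)) P := fun m =>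
    hXY.comp (measurable_id.pow_const m) (measurable_id.pow_const (n - m))
  have hXm : ∀ m ∈ Finset.range (n + 1), Integrable (fun ω => X ω ^ m) P := fun m hm =>
    hX.integrable_pow_of_le (Finset.mem_range_succ_iff.1 hm)
  have hYm : ∀ m, Integrable (fun ω => Y ω ^ (n - m)) P := fun m =>
    hY.integrable_pow_of_le (Nat.sub_le n m)
  have hXYm : ∀ m ∈ Finset.range (n + 1), Integrable (fun ω => X ω ^ m * Y ω ^ (n - m)) P :=
    fun m hm => (hpow m).integrable_mul (hXm m hm) (hYm m)
  have hexpand : ∀ ω, (X ω + Y ω) ^ n =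
      ∑ m ∈ Finset.range (n + 1), (n.choose m : ℝ) * (X ω ^ m * Y ω ^ (n - m)) := fun ω => by
    rw [add_pow]
    exact Finset.sum_congr rfl fun m _ => by ring
  simp_rw [hexpand]
  rw [integral_finsetSum _ fun m hm => (hXYm m hm).const_mul _]
  refine Finset.sum_congr rfl fun m hm => ?_
  rw [integral_const_mul, (hpow m).integral_fun_mul_eq_mul_integral (hXm m hm).1 (hYm m).1]
  ring

variable {q : ℕ → Ω → ℝ}

lemma ProbabilityTheory.iIndepFun.indepFun_sum_range (hindep : iIndepFun q P)
    (hmeas : ∀ i, AEMeasurable (q i) P) (n : ℕ) :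
    IndepFun (fun ω => ∑ i ∈ Finset.range n, q i ω) (q n) P := by
  simpa only [Finset.sum_fn] using
    hindep.indepFun_finsetSum_of_notMem₀ hmeas Finset.notMem_range_self

lemma integral_sum_range_eq_zero (hint : ∀ i, Integrable (q i) P) (hmean : ∀ i, P[q i] = 0)
    (n : ℕ) : ∫ ω, ∑ i ∈ Finset.range n, q i ω ∂P = 0 := by
  rw [integral_finsetSum _ fun i _ => hint i]
  exact Finset.sum_eq_zero fun i _ => hmean i

variable [IsProbabilityMeasure P]

lemma integral_sum_range_sq (hindep : iIndepFun q P) (hmem : ∀ i, MemLp (q i) 2 P)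
    (hmean : ∀ i, P[q i] = 0) (n : ℕ) :
    ∫ ω, (∑ i ∈ Finset.range n, q i ω) ^ 2 ∂P =
      ∑ i ∈ Finset.range n, ∫ ω, q i ω ^ 2 ∂P := by
  induction n with
  | zero => simp
  | succ n ih =>
    simp_rw [Finset.sum_range_succ]
    rw [(hindep.indepFun_sum_range (fun i => (hmem i).aemeasurable) n).integral_add_pow
      (memLp_finsetSum _ fun i _ => hmem i) (hmem n)]
    simp [Finset.sum_range_succ, ih, hmean n, add_comm]

lemma integral_sum_range_pow_four_le (hindep : iIndepFun q P) (hmem : ∀ i, MemLp (q i) 4 P)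
    (hmean : ∀ i, P[q i] = 0) {v κ : ℝ} (hv : ∀ i, ∫ ω, q i ω ^ 2 ∂P ≤ v)
    (hκ : ∀ i, ∫ ω, q i ω ^ 4 ∂P ≤ κ) (n : ℕ) :
    ∫ ω, (∑ i ∈ Finset.range n, q i ω) ^ 4 ∂P ≤ n * κ + 3 * n * (n - 1) * v ^ 2 := by
  have hmem2 : ∀ i, MemLp (q i) 2 P := fun i => (hmem i).mono_exponent (by norm_num)
  have hv_nonneg : 0 ≤ v := (integral_nonneg fun ω => sq_nonneg (q 0 ω)).trans (hv 0)
  induction n with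
  | zero => simp
  | succ n ih =>
    have hsq : ∫ ω, (∑ i ∈ Finset.range n, q i ω) ^ 2 ∂P ≤ n * v := by
      rw [integral_sum_range_sq hindep hmem2 hmean]
      simpa using Finset.sum_le_sum fun i (_ : i ∈ Finset.range n) => hv i
    have hcross :
        (∫ ω, (∑ i ∈ Finset.range n, q i ω) ^ 2 ∂P) * ∫ ω, q n ω ^ 2 ∂P ≤ n * v * v :=
      mul_le_mul hsq (hv n) (integral_nonneg fun ω => sq_nonneg _) (by positivity)
    have hmean_sum :=
      integral_sum_range_eq_zero (fun i => (hmem i).integrable (by norm_num)) hmean n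
    simp_rw [Finset.sum_range_succ]
    rw [(hindep.indepFun_sum_range (fun i => (hmem i).aemeasurable) n).integral_add_pow
      (memLp_finsetSum _ fun i _ => hmem i) (hmem n)]
    norm_num [Finset.sum_range_succ, hmean n, hmean_sum, show Nat.choose 4 2 = 6 from rfl]
    linarith [hκ n]

lemma integral_sum_range_pow_four_le_of_abs_le (hindep : iIndepFun q P)
    (hmeas : ∀ i, AEStronglyMeasurable (q i) P) {c : ℝ} (hbdd : ∀ i, ∀ᵐ ω ∂P, |q i ω| ≤ c)
    (hmean : ∀ i, P[q i] = 0) (n : ℕ) :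
    ∫ ω, (∑ i ∈ Finset.range n, q i ω) ^ 4 ∂P ≤ 3 * n ^ 2 * c ^ 4 := by
  have hmoment : ∀ i (k : ℕ), ∫ ω, q i ω ^ k ∂P ≤ c ^ k := fun i k => by
    refine (le_abs_self _).trans ?_
    simpa using norm_integral_le_of_norm_le_const (μ := P) (f := fun ω => q i ω ^ k)
      (by filter_upwards [hbdd i] with ω hω
          simpa using pow_le_pow_left₀ (abs_nonneg _) hω k)
  have hmem : ∀ i, MemLp (q i) 4 P := fun i => MemLp.of_bound (hmeas i) c (by simpa using hbdd i)
  have h := integral_sum_range_pow_four_le hindep hmem hmean (fun i => hmoment i 2)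
    (fun i => hmoment i 4) n
  have hc4 : 0 ≤ c ^ 4 := by positivity
  nlinarith

end Moments

/-- For i.i.d. `p i` with values in `[ε₀, 1]`, `ε₀ > 0`, mean `μ`, the expectation of the
fourth-order Taylor remainder satisfies `E[R₄(μ - p̄_n)] = O(1/n²)`. -/
theorem remainder_four_is_O_inv_sq
    {Ω : Type*} [MeasurableSpace Ω] (P : Measure Ω) [IsProbabilityMeasure P]
    (ε₀ : ℝ) (hε₀ : 0 < ε₀)
    (p : ℕ → Ω → ℝ) (hmeas : ∀ i, Measurable (p i))
    (hrange : ∀ i ω, p i ω ∈ Set.Icc ε₀ 1)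
    (hindep : iIndepFun p P)
    (hident : ∀ i, IdentDistrib (p i) (p 0) P P)
    (μ : ℝ) (hμ : μ = ∫ ω, p 0 ω ∂P) :
    ∃ C > (0 : ℝ), ∃ N : ℕ, 0 < N ∧ ∀ n : ℕ, N ≤ n →
      |∫ ω, taylorRem 4 μ ((∑ i ∈ Finset.range n, p i ω) / n) ∂P| ≤ C / (n : ℝ) ^ 2 := by
  have hp_int : ∀ i, Integrable (p i) P := fun i =>
    Integrable.of_bound (hmeas i).aestronglyMeasurable 1
      (ae_of_all _ fun ω => abs_le.2 ⟨by linarith [(hrange i ω).1], (hrange i ω).2⟩)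
  have hμ_mem : μ ∈ Set.Icc ε₀ 1 :=
    hμ ▸ (convex_Icc ε₀ 1).integral_mem isClosed_Icc (ae_of_all _ (hrange 0)) (hp_int 0)
  set q : ℕ → Ω → ℝ := fun i ω => p i ω - μ with hq
  have hq_bdd : ∀ i ω, |q i ω| ≤ 1 := fun i ω =>
    abs_sub_le_one_of_mem_Icc hε₀.le (hrange i ω) hμ_mem
  have hq_mem : ∀ i, MemLp (q i) 4 P := fun i =>
    MemLp.of_bound ((hmeas i).sub_const μ).aestronglyMeasurable 1 (ae_of_all _ (hq_bdd i))
  have hq_mean : ∀ i, P[q i] = 0 := fun i => by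
    simp [hq, integral_sub (hp_int i) (integrable_const μ), (hident i).integral_eq, ← hμ]
  have hmoment (n : ℕ) := integral_sum_range_pow_four_le_of_abs_le
    (hindep.comp _ fun _ => measurable_id.sub_const μ) (fun i => (hq_mem i).1)
    (fun i => ae_of_all _ (hq_bdd i)) hq_mean n
  refine ⟨3 / ε₀ ^ 5, by positivity, 1, one_pos, fun n hn => ?_⟩
  have hpointwise : ∀ ω, ‖taylorRem 4 μ ((∑ i ∈ Finset.range n, p i ω) / n)‖ ≤
      (∑ i ∈ Finset.range n, q i ω) ^ 4 / (n ^ 4 * ε₀ ^ 5) := fun ω => by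
    simpa only [Real.norm_eq_abs, hq, Even.pow_abs (by decide : Even 4)] using
      abs_taylorRem_sum_range_div_le (m := 4) hε₀ hμ_mem hn (hrange · ω)
  have hint : Integrable (fun ω => (∑ i ∈ Finset.range n, q i ω) ^ 4) P :=
    (memLp_finsetSum _ fun i _ => hq_mem i).integrable_pow_of_le le_rfl
  calc |∫ ω, taylorRem 4 μ ((∑ i ∈ Finset.range n, p i ω) / n) ∂P|
      ≤ (∫ ω, (∑ i ∈ Finset.range n, q i ω) ^ 4 ∂P) / (n ^ 4 * ε₀ ^ 5) := by
        rw [← integral_div]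
        exact norm_integral_le_of_norm_le (hint.div_const _) (ae_of_all _ hpointwise)
    _ ≤ 3 * n ^ 2 * 1 ^ 4 / (n ^ 4 * ε₀ ^ 5) := by gcongr; exact hmoment n
    _ = 3 / ε₀ ^ 5 / n ^ 2 := by field_simp
end

section
/- Let p_1, p_2, ... be independent identically distributed random variables with values in the interval [ε₀, 1] for some ε₀ > 0, with mean μ = E[p_1], and let p̄_n = (1/n)·∑_{i=1}^n p_i. Define R₂(μ − x) = −log(x/μ) − (μ − x)/μ − (μ − x)²/(2μ²) for x ∈ [ε₀, 1]. Then E[R₂(μ − p̄_n)] = E[(μ − p̄_n)³]/(3μ³) + E[(μ − p̄_n)⁴]/(4μ⁴) + E[R₄(μ − p̄_n)], where R₄(μ − x) = −log(x/μ) − ∑_{k=1}^4 (μ − x)^k/(k·μ^k), and consequently E[R₂(μ − p̄_n)] = O(1/n²). -/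
/-!
Pointwise `R₂ = (μ - x)³/(3μ³) + (μ - x)⁴/(4μ⁴) + R₄`, which integrates to the decomposition.
For the rate use instead `R₂ = (μ - x)³/(3μ³) + R₃` with `|R₃(μ - x)| ≤ C (μ - x)⁴` on `[ε₀, 1]`:
near `μ` by the logarithmic series, away from `μ` because `R₃` is bounded on a compact set.
For `X i = p i - μ` and `S n = ∑_{i<n} X i`, expanding `(S n + X n)^k` binomially and factoring
expectations by independence gives `E[S n ^ 3] = n E[X³]` and
`E[S n ^ 4] = n E[X⁴] + 3n(n-1) E[X²]²`; as `μ - p̄ₙ = -S n / n`, both `E[(μ - p̄ₙ)³]` and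
`E[(μ - p̄ₙ)⁴]` are `O(1/n²)`.
-/

open MeasureTheory ProbabilityTheory

lemma taylorRem_eq_add_taylorRem_succ (m : ℕ) (μ x : ℝ) :
    taylorRem m μ x = (μ - x) ^ (m + 1) / ((m + 1) * μ ^ (m + 1)) + taylorRem (m + 1) μ x := by
  simp only [taylorRem, Finset.sum_Icc_succ_top (Nat.le_add_left 1 m), Nat.cast_add_one]
  ring

lemma taylorRem_two_eq (μ x : ℝ) :
    taylorRem 2 μ x = (μ - x) ^ 3 / (3 * μ ^ 3) + (μ - x) ^ 4 / (4 * μ ^ 4) + taylorRem 4 μ x := by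
  rw [taylorRem_eq_add_taylorRem_succ 2, taylorRem_eq_add_taylorRem_succ 3]
  push_cast
  ring

lemma taylorRem_eq_neg_log_add_sum {μ : ℝ} (hμ : μ ≠ 0) (m : ℕ) (x : ℝ) :
    taylorRem m μ x = -(∑ i ∈ Finset.range m, ((μ - x) / μ) ^ (i + 1) / (i + 1)
      + Real.log (1 - (μ - x) / μ)) := by
  have hsum : ∑ k ∈ Finset.Icc 1 m, (μ - x) ^ k / ((k : ℝ) * μ ^ k)
      = ∑ i ∈ Finset.range m, ((μ - x) / μ) ^ (i + 1) / (i + 1) := by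
    rw [← Finset.Ico_add_one_right_eq_Icc, Finset.sum_Ico_eq_sum_range, Nat.add_sub_cancel]
    refine Finset.sum_congr rfl fun i _ => ?_
    rw [div_pow, div_div, mul_comm, add_comm 1 i]
    push_cast
    rfl
  rw [taylorRem, hsum, one_sub_div hμ, sub_sub_cancel]
  ring

lemma abs_taylorRem_le_of_abs_sub_le {μ x : ℝ} (hμ : 0 < μ) (hx : |μ - x| ≤ μ / 2) (m : ℕ) :
    |taylorRem m μ x| ≤ 2 * (|μ - x| / μ) ^ (m + 1) := by
  set t := (μ - x) / μ
  have ht : |t| ≤ 1 / 2 := by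
    rw [abs_div, abs_of_pos hμ, div_le_iff₀ hμ]; linarith
  rw [taylorRem_eq_neg_log_add_sum hμ.ne', abs_neg]
  calc _ ≤ |t| ^ (m + 1) / (1 - |t|) := Real.abs_log_sub_add_sum_range_le (by linarith) m
    _ ≤ |t| ^ (m + 1) / (1 / 2) := by gcongr; linarith
    _ = 2 * (|μ - x| / μ) ^ (m + 1) := by rw [abs_div, abs_of_pos hμ]; ring

lemma continuousOn_taylorRem (m : ℕ) {μ : ℝ} (hμ : μ ≠ 0) : ContinuousOn (taylorRem m μ) {0}ᶜ := by
  unfold taylorRem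
  refine (ContinuousOn.log (by fun_prop) fun x hx => div_ne_zero hx hμ).neg.sub ?_
  fun_prop

lemma measurable_taylorRem (m : ℕ) (μ : ℝ) : Measurable (taylorRem m μ) := by
  unfold taylorRem
  fun_prop

lemma exists_abs_taylorRem_le (m : ℕ) {μ : ℝ} (hμ : 0 < μ) {K : Set ℝ} (hK : IsCompact K)
    (h0 : 0 ∉ K) : ∃ C, 0 ≤ C ∧ ∀ x ∈ K, |taylorRem m μ x| ≤ C * |μ - x| ^ (m + 1) := by
  obtain ⟨M, hM⟩ := hK.exists_bound_of_continuousOn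
    ((continuousOn_taylorRem m hμ.ne').mono fun x hx (hx0 : x = 0) => h0 (hx0 ▸ hx))
  refine ⟨max M 2 * (2 / μ) ^ (m + 1), by positivity, fun x hx => ?_⟩
  rcases le_or_gt |μ - x| (μ / 2) with hnear | hfar
  · calc |taylorRem m μ x| ≤ 2 * (|μ - x| / μ) ^ (m + 1) :=
          abs_taylorRem_le_of_abs_sub_le hμ hnear m
      _ = 2 * (1 / μ) ^ (m + 1) * |μ - x| ^ (m + 1) := by ring
      _ ≤ max M 2 * (2 / μ) ^ (m + 1) * |μ - x| ^ (m + 1) := by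
        gcongr
        · exact le_max_right _ _
        · linarith
  · have hone : 1 ≤ (2 / μ * |μ - x|) ^ (m + 1) :=
      one_le_pow₀ (by rw [div_mul_eq_mul_div, le_div_iff₀ hμ]; linarith)
    calc |taylorRem m μ x| ≤ max M 2 := (hM x hx).trans (le_max_left _ _)
      _ ≤ max M 2 * (2 / μ * |μ - x|) ^ (m + 1) := le_mul_of_one_le_right (by positivity) hone
      _ = max M 2 * (2 / μ) ^ (m + 1) * |μ - x| ^ (m + 1) := by ring

section Moments

variable {Ω : Type*} [MeasurableSpace Ω] {P : Measure Ω}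

lemma integrable_pow_of_abs_le [IsFiniteMeasure P] {f : Ω → ℝ} (hf : AEStronglyMeasurable f P)
    {B : ℝ} (hB : ∀ ω, |f ω| ≤ B) (j : ℕ) : Integrable (fun ω => f ω ^ j) P :=
  Integrable.of_bound (hf.pow j) (B ^ j) (ae_of_all _ fun ω => by
    rw [Real.norm_eq_abs, abs_pow]; exact pow_le_pow_left₀ (abs_nonneg _) (hB ω) j)

lemma ProbabilityTheory.IndepFun.integral_add_pow_s8 {Y Z : Ω → ℝ} (hYZ : IndepFun Y Z P)
    (hY : ∀ j, Integrable (fun ω => Y ω ^ j) P) (hZ : ∀ j, Integrable (fun ω => Z ω ^ j) P)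
    (k : ℕ) :
    ∫ ω, (Y ω + Z ω) ^ k ∂P
      = ∑ j ∈ Finset.range (k + 1), (∫ ω, Y ω ^ j ∂P) * (∫ ω, Z ω ^ (k - j) ∂P) * k.choose j := by
  have hpow (j l : ℕ) : IndepFun (fun ω => Y ω ^ j) (fun ω => Z ω ^ l) P :=
    hYZ.comp (measurable_id.pow_const j) (measurable_id.pow_const l)
  simp_rw [add_pow]
  rw [integral_finsetSum _ fun j _ => show Integrable
    (fun ω => Y ω ^ j * Z ω ^ (k - j) * (k.choose j : ℝ)) P from
      ((hpow j (k - j)).integrable_mul (hY j) (hZ (k - j))).mul_const _]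
  refine Finset.sum_congr rfl fun j _ => ?_
  rw [integral_mul_const, (hpow j (k - j)).integral_fun_mul_eq_mul_integral
    (hY j).aestronglyMeasurable (hZ (k - j)).aestronglyMeasurable]

lemma integral_pow_eq_of_identDistrib {X : ℕ → Ω → ℝ} (hident : ∀ i, IdentDistrib (X i) (X 0) P P)
    (i j : ℕ) : ∫ ω, X i ω ^ j ∂P = ∫ ω, X 0 ω ^ j ∂P :=
  ((hident i).comp (measurable_id.pow_const j)).integral_eq

variable {X : ℕ → Ω → ℝ} {B : ℝ}

lemma integral_sum_range_succ_pow [IsFiniteMeasure P] (hmeas : ∀ i, Measurable (X i))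
    (hbdd : ∀ i ω, |X i ω| ≤ B) (hindep : iIndepFun X P) (n k : ℕ) :
    ∫ ω, (∑ i ∈ Finset.range (n + 1), X i ω) ^ k ∂P
      = ∑ j ∈ Finset.range (k + 1),
          (∫ ω, (∑ i ∈ Finset.range n, X i ω) ^ j ∂P) * (∫ ω, X n ω ^ (k - j) ∂P) * k.choose j := by
  have hindep_n : IndepFun (fun ω => ∑ i ∈ Finset.range n, X i ω) (X n) P := by
    simpa only [Finset.sum_fn] using
      hindep.indepFun_finsetSum_of_notMem hmeas (Finset.notMem_range_self (n := n))
  have hbdd_n (ω : Ω) : |∑ i ∈ Finset.range n, X i ω| ≤ n * B := by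
    simpa using norm_sum_le_of_le (Finset.range n) (f := (X · ω)) fun i _ => hbdd i ω
  simp_rw [fun ω => Finset.sum_range_succ (X · ω) n]
  exact hindep_n.integral_add_pow_s8 (integrable_pow_of_abs_le (by fun_prop) hbdd_n)
    (integrable_pow_of_abs_le (hmeas n).aestronglyMeasurable (hbdd n)) k

lemma integral_sum_range_eq_zero_s8 [IsFiniteMeasure P] (hmeas : ∀ i, Measurable (X i))
    (hbdd : ∀ i ω, |X i ω| ≤ B) (hcent : ∀ i, ∫ ω, X i ω ∂P = 0) (n : ℕ) :
    ∫ ω, ∑ i ∈ Finset.range n, X i ω ∂P = 0 := by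
  rw [integral_finsetSum _ fun i _ => by
    simpa using integrable_pow_of_abs_le (hmeas i).aestronglyMeasurable (hbdd i) 1]
  simp [hcent]

variable [IsProbabilityMeasure P]

lemma integral_sum_range_pow_two (hmeas : ∀ i, Measurable (X i)) (hbdd : ∀ i ω, |X i ω| ≤ B)
    (hindep : iIndepFun X P) (hident : ∀ i, IdentDistrib (X i) (X 0) P P)
    (hcent : ∀ i, ∫ ω, X i ω ∂P = 0) (n : ℕ) :
    ∫ ω, (∑ i ∈ Finset.range n, X i ω) ^ 2 ∂P = n * ∫ ω, X 0 ω ^ 2 ∂P := by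
  induction n with
  | zero => simp
  | succ n ih =>
    rw [integral_sum_range_succ_pow hmeas hbdd hindep]
    simp only [Finset.sum_range_succ, Finset.sum_range_zero, Nat.reduceSub, pow_zero, pow_one,
      integral_const, probReal_univ, smul_eq_mul, ih, hcent,
      integral_sum_range_eq_zero_s8 hmeas hbdd hcent,
      integral_pow_eq_of_identDistrib hident n, Nat.choose_zero_right, Nat.choose_one_right,
      Nat.choose_self]
    push_cast
    ring

lemma integral_sum_range_pow_three (hmeas : ∀ i, Measurable (X i)) (hbdd : ∀ i ω, |X i ω| ≤ B)
    (hindep : iIndepFun X P) (hident : ∀ i, IdentDistrib (X i) (X 0) P P)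
    (hcent : ∀ i, ∫ ω, X i ω ∂P = 0) (n : ℕ) :
    ∫ ω, (∑ i ∈ Finset.range n, X i ω) ^ 3 ∂P = n * ∫ ω, X 0 ω ^ 3 ∂P := by
  induction n with
  | zero => simp
  | succ n ih =>
    rw [integral_sum_range_succ_pow hmeas hbdd hindep]
    simp only [Finset.sum_range_succ, Finset.sum_range_zero, Nat.reduceSub, pow_zero, pow_one,
      integral_const, probReal_univ, smul_eq_mul, ih, hcent,
      integral_sum_range_eq_zero_s8 hmeas hbdd hcent,
      integral_pow_eq_of_identDistrib hident n, Nat.choose_zero_right, Nat.choose_one_right,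
      Nat.choose_self]
    push_cast
    ring

lemma integral_sum_range_pow_four (hmeas : ∀ i, Measurable (X i)) (hbdd : ∀ i ω, |X i ω| ≤ B)
    (hindep : iIndepFun X P) (hident : ∀ i, IdentDistrib (X i) (X 0) P P)
    (hcent : ∀ i, ∫ ω, X i ω ∂P = 0) (n : ℕ) :
    ∫ ω, (∑ i ∈ Finset.range n, X i ω) ^ 4 ∂P
      = n * ∫ ω, X 0 ω ^ 4 ∂P + 3 * n * (n - 1) * (∫ ω, X 0 ω ^ 2 ∂P) ^ 2 := by
  induction n with
  | zero => simp
  | succ n ih =>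
    rw [integral_sum_range_succ_pow hmeas hbdd hindep]
    simp only [Finset.sum_range_succ, Finset.sum_range_zero, Nat.reduceSub, pow_zero, pow_one,
      integral_const, probReal_univ, smul_eq_mul, ih, hcent,
      integral_sum_range_eq_zero_s8 hmeas hbdd hcent,
      integral_pow_eq_of_identDistrib hident n, Nat.choose_zero_right, Nat.choose_one_right,
      Nat.choose_self, integral_sum_range_pow_two hmeas hbdd hindep hident hcent,
      Nat.choose_two_right]
    push_cast
    ring

lemma abs_integral_pow_le {f : Ω → ℝ} (hB : ∀ ω, |f ω| ≤ B) (k : ℕ) :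
    |∫ ω, f ω ^ k ∂P| ≤ B ^ k := by
  simpa using norm_integral_le_of_norm_le_const (μ := P) (f := fun ω => f ω ^ k) (ae_of_all _
    fun ω => by rw [Real.norm_eq_abs, abs_pow]; exact pow_le_pow_left₀ (abs_nonneg _) (hB ω) k)

lemma abs_integral_sum_range_pow_three_le (hmeas : ∀ i, Measurable (X i))
    (hbdd : ∀ i ω, |X i ω| ≤ B) (hindep : iIndepFun X P)
    (hident : ∀ i, IdentDistrib (X i) (X 0) P P) (hcent : ∀ i, ∫ ω, X i ω ∂P = 0) (n : ℕ) :
    |∫ ω, (∑ i ∈ Finset.range n, X i ω) ^ 3 ∂P| ≤ n * B ^ 3 := by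
  rw [integral_sum_range_pow_three hmeas hbdd hindep hident hcent, abs_mul, Nat.abs_cast]
  gcongr
  exact abs_integral_pow_le (hbdd 0) 3

lemma integral_sum_range_pow_four_le_s8 (hmeas : ∀ i, Measurable (X i))
    (hbdd : ∀ i ω, |X i ω| ≤ B) (hindep : iIndepFun X P)
    (hident : ∀ i, IdentDistrib (X i) (X 0) P P) (hcent : ∀ i, ∫ ω, X i ω ∂P = 0) (n : ℕ) :
    ∫ ω, (∑ i ∈ Finset.range n, X i ω) ^ 4 ∂P ≤ 3 * n ^ 2 * B ^ 4 := by
  have hm4 : ∫ ω, X 0 ω ^ 4 ∂P ≤ B ^ 4 := (le_abs_self _).trans (abs_integral_pow_le (hbdd 0) 4)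
  have hm2 : (∫ ω, X 0 ω ^ 2 ∂P) ^ 2 ≤ B ^ 4 := by
    rw [← sq_abs, show B ^ 4 = (B ^ 2) ^ 2 by ring]
    exact pow_le_pow_left₀ (abs_nonneg _) (abs_integral_pow_le (hbdd 0) 2) 2
  have hn : 0 ≤ (n : ℝ) * (n - 1) := by
    rcases n with _ | n
    · simp
    · push_cast; rw [add_sub_cancel_right]; positivity
  rw [integral_sum_range_pow_four hmeas hbdd hindep hident hcent]
  nlinarith [mul_le_mul_of_nonneg_left hm2 hn, mul_le_mul_of_nonneg_left hm4 n.cast_nonneg,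
    mul_nonneg n.cast_nonneg (Even.pow_nonneg (by decide : Even 4) B)]

end Moments

section TaylorIntegral

variable {Ω : Type*} [MeasurableSpace Ω] {P : Measure Ω} [IsFiniteMeasure P] {μ : ℝ} {K : Set ℝ}
  {Y : Ω → ℝ}

lemma integrable_comp_of_isCompact {g : ℝ → ℝ} (hK : IsCompact K) (hg : ContinuousOn g K)
    (hgm : Measurable g) (hY : Measurable Y) (hYK : ∀ ω, Y ω ∈ K) :
    Integrable (fun ω => g (Y ω)) P :=
  let ⟨M, hM⟩ := hK.exists_bound_of_continuousOn hg
  Integrable.of_bound (hgm.comp hY).aestronglyMeasurable M (ae_of_all _ fun ω => hM _ (hYK ω))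

lemma integrable_taylorRem_comp (m : ℕ) (hμ : μ ≠ 0) (hK : IsCompact K) (h0 : 0 ∉ K)
    (hY : Measurable Y) (hYK : ∀ ω, Y ω ∈ K) : Integrable (fun ω => taylorRem m μ (Y ω)) P :=
  integrable_comp_of_isCompact hK
    ((continuousOn_taylorRem m hμ).mono fun x hx (hx0 : x = 0) => h0 (hx0 ▸ hx))
    (measurable_taylorRem m μ) hY hYK

lemma integrable_sub_pow_comp (k : ℕ) (μ : ℝ) (hK : IsCompact K) (hY : Measurable Y)
    (hYK : ∀ ω, Y ω ∈ K) : Integrable (fun ω => (μ - Y ω) ^ k) P :=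
  integrable_comp_of_isCompact (g := fun x => (μ - x) ^ k) hK (by fun_prop) (by fun_prop)
    hY hYK

lemma integral_taylorRem_two_eq (hμ : μ ≠ 0) (hK : IsCompact K) (h0 : 0 ∉ K) (hY : Measurable Y)
    (hYK : ∀ ω, Y ω ∈ K) :
    ∫ ω, taylorRem 2 μ (Y ω) ∂P = (∫ ω, (μ - Y ω) ^ 3 ∂P) / (3 * μ ^ 3)
      + (∫ ω, (μ - Y ω) ^ 4 ∂P) / (4 * μ ^ 4) + ∫ ω, taylorRem 4 μ (Y ω) ∂P := by
  have h3 := (integrable_sub_pow_comp (P := P) 3 μ hK hY hYK).div_const (3 * μ ^ 3)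
  have h4 := (integrable_sub_pow_comp (P := P) 4 μ hK hY hYK).div_const (4 * μ ^ 4)
  have hR4 := integrable_taylorRem_comp (P := P) 4 hμ hK h0 hY hYK
  simp_rw [taylorRem_two_eq]
  rw [integral_add (h3.fun_add h4) hR4, integral_add h3 h4, integral_div, integral_div]

lemma abs_integral_taylorRem_two_le (hμ : μ ≠ 0) (hK : IsCompact K) (h0 : 0 ∉ K)
    (hY : Measurable Y) (hYK : ∀ ω, Y ω ∈ K) {C : ℝ}
    (hC : ∀ x ∈ K, |taylorRem 3 μ x| ≤ C * |μ - x| ^ 4) :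
    |∫ ω, taylorRem 2 μ (Y ω) ∂P|
      ≤ |∫ ω, (μ - Y ω) ^ 3 ∂P| / (3 * |μ| ^ 3) + C * ∫ ω, (μ - Y ω) ^ 4 ∂P := by
  have hR3 := integrable_taylorRem_comp (P := P) 3 hμ hK h0 hY hYK
  have h3 := integrable_sub_pow_comp (P := P) 3 μ hK hY hYK
  simp_rw [taylorRem_eq_add_taylorRem_succ 2 μ]
  rw [integral_add (h3.div_const _) hR3, integral_div]
  calc _ ≤ |(∫ ω, (μ - Y ω) ^ 3 ∂P) / ((2 + 1) * μ ^ 3)| + |∫ ω, taylorRem 3 μ (Y ω) ∂P| :=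
        abs_add_le _ _
    _ ≤ |∫ ω, (μ - Y ω) ^ 3 ∂P| / (3 * |μ| ^ 3) + ∫ ω, C * (μ - Y ω) ^ 4 ∂P := by
        gcongr
        · rw [abs_div, abs_mul, abs_pow]; norm_num
        · refine (abs_integral_le_integral_abs).trans (integral_mono hR3.abs
            ((integrable_sub_pow_comp 4 μ hK hY hYK).const_mul C) fun ω => ?_)
          simpa [Even.pow_abs (by decide : Even 4)] using hC _ (hYK ω)
    _ = _ := by rw [integral_const_mul]

end TaylorIntegral

lemma sampleMean_central_moments_le {Ω : Type*} [MeasurableSpace Ω] {P : Measure Ω}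
    [IsProbabilityMeasure P] {p : ℕ → Ω → ℝ} {μ B : ℝ} (hmeas : ∀ i, Measurable (p i))
    (hbdd : ∀ i ω, |p i ω - μ| ≤ B) (hindep : iIndepFun p P)
    (hident : ∀ i, IdentDistrib (p i) (p 0) P P) (hμ : μ = ∫ ω, p 0 ω ∂P) {n : ℕ} (hn : 0 < n) :
    |∫ ω, (μ - (∑ i ∈ Finset.range n, p i ω) / n) ^ 3 ∂P| ≤ B ^ 3 / n ^ 2 ∧
      ∫ ω, (μ - (∑ i ∈ Finset.range n, p i ω) / n) ^ 4 ∂P ≤ 3 * B ^ 4 / n ^ 2 := by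
  set X : ℕ → Ω → ℝ := fun i ω => p i ω - μ
  have hXmeas (i : ℕ) : Measurable (X i) := (hmeas i).sub_const μ
  have hXindep : iIndepFun X P := hindep.comp (fun _ x => x - μ) fun _ => measurable_id.sub_const μ
  have hXident (i : ℕ) : IdentDistrib (X i) (X 0) P P :=
    (hident i).comp (measurable_id.sub_const μ)
  have hXcent (i : ℕ) : ∫ ω, X i ω ∂P = 0 := by
    have hint : Integrable (p i) P := by
      simpa [X, sub_eq_add_neg, integrable_add_const_iff] using
        integrable_pow_of_abs_le (P := P) (hXmeas i).aestronglyMeasurable (hbdd i) 1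
    simp [X, integral_sub hint (integrable_const μ), (hident i).integral_eq, ← hμ]
  have hnR : (0 : ℝ) < n := Nat.cast_pos.mpr hn
  have hdev (ω : Ω) :
      μ - (∑ i ∈ Finset.range n, p i ω) / n = -(∑ i ∈ Finset.range n, X i ω) / n := by
    simp only [X, Finset.sum_sub_distrib, Finset.sum_const, Finset.card_range, nsmul_eq_mul]
    field_simp
    ring
  have h3 : ∫ ω, (μ - (∑ i ∈ Finset.range n, p i ω) / n) ^ 3 ∂P
      = -(∫ ω, (∑ i ∈ Finset.range n, X i ω) ^ 3 ∂P) / n ^ 3 := by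
    simp_rw [hdev, div_pow, Odd.neg_pow (by decide : Odd 3)]
    rw [integral_div, integral_neg]
  have h4 : ∫ ω, (μ - (∑ i ∈ Finset.range n, p i ω) / n) ^ 4 ∂P
      = (∫ ω, (∑ i ∈ Finset.range n, X i ω) ^ 4 ∂P) / n ^ 4 := by
    simp_rw [hdev, div_pow, Even.neg_pow (by decide : Even 4)]
    rw [integral_div]
  rw [h3, h4, abs_div, abs_neg, abs_of_pos (pow_pos hnR 3)]
  constructor
  · calc _ ≤ n * B ^ 3 / n ^ 3 := by
          gcongr; exact abs_integral_sum_range_pow_three_le hXmeas hbdd hXindep hXident hXcent n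
      _ = B ^ 3 / n ^ 2 := by field_simp
  · calc _ ≤ 3 * n ^ 2 * B ^ 4 / n ^ 4 := by
          gcongr; exact integral_sum_range_pow_four_le_s8 hXmeas hbdd hXindep hXident hXcent n
      _ = 3 * B ^ 4 / n ^ 2 := by field_simp

lemma sum_range_div_mem_of_convex {s : Set ℝ} (hs : Convex ℝ s) {z : ℕ → ℝ} {n : ℕ} (hn : 0 < n)
    (hz : ∀ i, z i ∈ s) : (∑ i ∈ Finset.range n, z i) / n ∈ s := by
  have hnR : (n : ℝ) ≠ 0 := Nat.cast_ne_zero.mpr hn.ne'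
  rw [Finset.sum_div]
  simpa [div_eq_inv_mul] using hs.sum_mem (t := Finset.range n) (w := fun _ => (n : ℝ)⁻¹)
    (fun _ _ => by positivity) (by simp [hnR]) fun i _ => hz i

/-- For i.i.d. `p i` with values in `[ε₀, 1]`, `ε₀ > 0`, mean `μ`, the second-order Taylor
remainder satisfies the exact decomposition
`E[R₂(μ - p̄_n)] = E[(μ - p̄_n)³]/(3μ³) + E[(μ - p̄_n)⁴]/(4μ⁴) + E[R₄(μ - p̄_n)]`,
and consequently `E[R₂(μ - p̄_n)] = O(1/n²)`. -/
theorem remainder_two_decomposition_and_O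
    {Ω : Type*} [MeasurableSpace Ω] (P : Measure Ω) [IsProbabilityMeasure P]
    (ε₀ : ℝ) (hε₀ : 0 < ε₀)
    (p : ℕ → Ω → ℝ) (hmeas : ∀ i, Measurable (p i))
    (hrange : ∀ i ω, p i ω ∈ Set.Icc ε₀ 1)
    (hindep : iIndepFun p P)
    (hident : ∀ i, IdentDistrib (p i) (p 0) P P)
    (μ : ℝ) (hμ : μ = ∫ ω, p 0 ω ∂P) :
    (∀ n : ℕ, 0 < n →
      ∫ ω, taylorRem 2 μ ((∑ i ∈ Finset.range n, p i ω) / n) ∂P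
        = (∫ ω, (μ - (∑ i ∈ Finset.range n, p i ω) / n) ^ 3 ∂P) / (3 * μ ^ 3)
          + (∫ ω, (μ - (∑ i ∈ Finset.range n, p i ω) / n) ^ 4 ∂P) / (4 * μ ^ 4)
          + ∫ ω, taylorRem 4 μ ((∑ i ∈ Finset.range n, p i ω) / n) ∂P) ∧
    (∃ C > (0 : ℝ), ∃ N : ℕ, 0 < N ∧ ∀ n : ℕ, N ≤ n →
      |∫ ω, taylorRem 2 μ ((∑ i ∈ Finset.range n, p i ω) / n) ∂P| ≤ C / (n : ℝ) ^ 2) := by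
  have hK : IsCompact (Set.Icc ε₀ 1) := isCompact_Icc
  have h0 : (0 : ℝ) ∉ Set.Icc ε₀ 1 := fun h => h.1.not_gt hε₀
  have hμK : μ ∈ Set.Icc ε₀ 1 := hμ ▸ (convex_Icc ε₀ 1).integral_mem isClosed_Icc
    (ae_of_all _ (hrange 0)) (integrable_comp_of_isCompact (g := id) hK continuousOn_id
      measurable_id (hmeas 0) (hrange 0))
  have hμpos : 0 < μ := hε₀.trans_le hμK.1
  have hmean_meas (n : ℕ) : Measurable fun ω => (∑ i ∈ Finset.range n, p i ω) / n := by fun_prop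
  have hmean_mem {n : ℕ} (hn : 0 < n) (ω : Ω) : (∑ i ∈ Finset.range n, p i ω) / n ∈ Set.Icc ε₀ 1 :=
    sum_range_div_mem_of_convex (convex_Icc ε₀ 1) hn fun i => hrange i ω
  have hdev (i : ℕ) (ω : Ω) : |p i ω - μ| ≤ 1 := by
    have := hrange i ω
    exact abs_sub_le_iff.mpr ⟨by linarith [this.2, hμK.1], by linarith [this.1, hμK.2]⟩
  obtain ⟨C, hC0, hC⟩ := exists_abs_taylorRem_le 3 hμpos hK h0
  refine ⟨fun n hn => integral_taylorRem_two_eq hμpos.ne' hK h0 (hmean_meas n) (hmean_mem hn),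
    1 / (3 * μ ^ 3) + 3 * C, by positivity, 1, one_pos, fun n hn => ?_⟩
  obtain ⟨h3, h4⟩ := sampleMean_central_moments_le hmeas hdev hindep hident hμ hn
  calc _ ≤ |∫ ω, (μ - (∑ i ∈ Finset.range n, p i ω) / n) ^ 3 ∂P| / (3 * |μ| ^ 3)
        + C * ∫ ω, (μ - (∑ i ∈ Finset.range n, p i ω) / n) ^ 4 ∂P :=
        abs_integral_taylorRem_two_le hμpos.ne' hK h0 (hmean_meas n) (hmean_mem hn) hC
    _ ≤ 1 / n ^ 2 / (3 * μ ^ 3) + C * (3 / n ^ 2) := by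
        rw [abs_of_pos hμpos]
        gcongr
        · simpa using h3
        · simpa using h4
    _ = _ := by ring
end
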